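/- arXiv:2106.13067 — 6 statements merged into one kernel-verified Lean document; each statement's English description precedes it below -/
import Mathlib

section
/- Let each A_i (i = 1,…,n) be a maximal monotone set-valued operator on ℝ^d and let B : ℝ^d → ℝ^d be continuous and monotone. Let (z^k) be a sequence in ℝ^d, (w_1^k, …, w_{n+1}^k) sequences with Σ_{i=1}^{n+1} w_i^k = 0 for all k, and (x_i^k, y_i^k) sequences in ℝ^d × ℝ^d with y_i^k ∈ A_i(x_i^k) for i = 1,…,n and all k. Suppose that for some scalars ξ₁, ξ₂, ξ₃ > 0, ξ₁ Σ_{i=1}^n ‖y_i^k − w_i^k‖² + ξ₂ Σ_{i=1}^n ‖z^k − x_i^k‖² + ξ₃ ‖B(z^k) − w_{n+1}^k‖² → 0 as k → ∞, and that p^k := (z^k, w_1^k, …, w_{n+1}^k) → p̂ = (ẑ, ŵ_1, …, ŵ_{n+1}). Then p̂ ∈ S. -/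
open scoped RealInnerProductSpace BigOperators NNReal

noncomputable section

/-- `Ed d` is Euclidean space `ℝ^d`. -/
abbrev Ed (d : ℕ) := EuclideanSpace ℝ (Fin d)

/-- A set-valued operator `A : ℝ^d → Set (ℝ^d)` is monotone. -/
def IsMonotoneOp {d : ℕ} (A : Ed d → Set (Ed d)) : Prop :=
  ∀ ⦃x y u v : Ed d⦄, u ∈ A x → v ∈ A y → 0 ≤ ⟪u - v, x - y⟫

/-- A set-valued operator is maximal monotone: monotone and its graph admits
no proper monotone extension. -/
def IsMaximalMonotoneOp {d : ℕ} (A : Ed d → Set (Ed d)) : Prop :=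
  IsMonotoneOp A ∧ ∀ A' : Ed d → Set (Ed d), IsMonotoneOp A' → (∀ u, A u ⊆ A' u) → A' = A

/-- The extended solution set `S` of `0 ∈ ∑ᵢ Aᵢ(z) + B(z)`. -/
def extSolSet {d n : ℕ} (A : Fin n → Ed d → Set (Ed d)) (B : Ed d → Ed d) :
    Set (Ed d × (Fin (n + 1) → Ed d)) :=
  {p | (∀ i : Fin n, p.2 i.castSucc ∈ A i p.1) ∧ p.2 (Fin.last n) = B p.1 ∧ ∑ i, p.2 i = 0}
open Filter

/-- Squared norm tendsto zero implies the sequence tends to zero. -/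
lemma tendsto_zero_of_norm_sq {d : ℕ} {f : ℕ → Ed d}
    (h : Filter.Tendsto (fun k => ‖f k‖ ^ 2) atTop (nhds 0)) :
    Filter.Tendsto f atTop (nhds 0) := by
  rw [tendsto_zero_iff_norm_tendsto_zero]
  have := (Real.continuous_sqrt.tendsto 0).comp h
  simpa only [Function.comp_def, Real.sqrt_sq (norm_nonneg _), Real.sqrt_zero] using this

/-- Graph of a maximal monotone operator is sequentially closed. -/
lemma maximal_closed_graph {d : ℕ} {A : Ed d → Set (Ed d)} (hA : IsMaximalMonotoneOp A)
    {x y : ℕ → Ed d} {a b : Ed d} (hxy : ∀ k, y k ∈ A (x k))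
    (hx : Filter.Tendsto x atTop (nhds a)) (hy : Filter.Tendsto y atTop (nhds b)) :
    b ∈ A a := by
  set A' : Ed d → Set (Ed d) := fun u => A u ∪ {v | u = a ∧ v = b} with hA'
  have key : ∀ (q v : Ed d), v ∈ A q → 0 ≤ ⟪b - v, a - q⟫ := by
    intro q v hv
    have hlim : Filter.Tendsto (fun k => ⟪y k - v, x k - q⟫) atTop
        (nhds ⟪b - v, a - q⟫) :=
      Filter.Tendsto.inner (hy.sub tendsto_const_nhds) (hx.sub tendsto_const_nhds)
    exact ge_of_tendsto hlim (Filter.Eventually.of_forall fun k => hA.1 (hxy k) hv)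
  have hmono : IsMonotoneOp A' := by
    intro p q u v hu hv
    rcases hu with hu | ⟨hp, hu⟩ <;> rcases hv with hv | ⟨hq, hv⟩
    · exact hA.1 hu hv
    · subst hq; subst hv
      have := key p u hu
      rwa [← inner_neg_neg, neg_sub, neg_sub] at this
    · subst hp; subst hu
      exact key q v hv
    · subst hp; subst hu; subst hq; subst hv
      simp
  have heq := hA.2 A' hmono (fun u => Set.subset_union_left)
  rw [← heq]
  exact Or.inr ⟨rfl, rfl⟩

/-- limits of sequences with vanishing residual and convergent iterates
belong to the extended solution set. -/
theorem limit_mem_extSolSet {d n : ℕ}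
    (A : Fin n → Ed d → Set (Ed d)) (hA : ∀ i, IsMaximalMonotoneOp (A i))
    (B : Ed d → Ed d) (hBc : Continuous B)
    (hBmono : ∀ u v : Ed d, 0 ≤ ⟪B u - B v, u - v⟫)
    (z : ℕ → Ed d) (w : ℕ → Fin (n + 1) → Ed d) (hw : ∀ k, ∑ i, w k i = 0)
    (x y : ℕ → Fin n → Ed d) (hxy : ∀ k i, y k i ∈ A i (x k i))
    (ξ₁ ξ₂ ξ₃ : ℝ) (h1 : 0 < ξ₁) (h2 : 0 < ξ₂) (h3 : 0 < ξ₃)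
    (hres : Tendsto (fun k =>
        ξ₁ * ∑ i, ‖y k i - w k i.castSucc‖ ^ 2 + ξ₂ * ∑ i, ‖z k - x k i‖ ^ 2
          + ξ₃ * ‖B (z k) - w k (Fin.last n)‖ ^ 2) atTop (nhds 0))
    (zhat : Ed d) (what : Fin (n + 1) → Ed d)
    (hz : Tendsto z atTop (nhds zhat))
    (hwconv : ∀ i, Tendsto (fun k => w k i) atTop (nhds (what i))) :
    (zhat, what) ∈ extSolSet A B := by
  set r : ℕ → ℝ := fun k =>
      ξ₁ * ∑ i, ‖y k i - w k i.castSucc‖ ^ 2 + ξ₂ * ∑ i, ‖z k - x k i‖ ^ 2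
        + ξ₃ * ‖B (z k) - w k (Fin.last n)‖ ^ 2 with hr
  have hs1 : ∀ k, (0:ℝ) ≤ ∑ i, ‖y k i - w k i.castSucc‖ ^ 2 :=
    fun k => Finset.sum_nonneg fun i _ => by positivity
  have hs2 : ∀ k, (0:ℝ) ≤ ∑ i, ‖z k - x k i‖ ^ 2 :=
    fun k => Finset.sum_nonneg fun i _ => by positivity
  -- helper to extract limit zero from coefficient times nonneg term bounded by r
  have extract : ∀ (c : ℝ) (_ : 0 < c) (g : ℕ → ℝ), (∀ k, 0 ≤ g k) →
      (∀ k, c * g k ≤ r k) → Tendsto g atTop (nhds 0) := by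
    intro c hc g hg hb
    have h0 : Tendsto (fun k => c * g k) atTop (nhds 0) :=
      tendsto_of_tendsto_of_tendsto_of_le_of_le tendsto_const_nhds hres
        (fun k => mul_nonneg hc.le (hg k)) hb
    have h0' := h0.const_mul c⁻¹
    have heq : (fun k => c⁻¹ * (c * g k)) = g := funext fun k => by field_simp
    rw [heq] at h0'
    simpa using h0'
  have hterm1 : ∀ i : Fin n, Tendsto (fun k => y k i - w k i.castSucc) atTop (nhds 0) := by
    intro i
    apply tendsto_zero_of_norm_sq
    apply extract ξ₁ h1 _ (fun k => by positivity)
    intro k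
    have hle : ‖y k i - w k i.castSucc‖ ^ 2 ≤ ∑ j, ‖y k j - w k j.castSucc‖ ^ 2 :=
      Finset.single_le_sum (f := fun j => ‖y k j - w k j.castSucc‖ ^ 2)
        (fun j _ => by positivity) (Finset.mem_univ i)
    have h2' := mul_nonneg h2.le (hs2 k)
    have h3' : (0:ℝ) ≤ ξ₃ * ‖B (z k) - w k (Fin.last n)‖ ^ 2 := by positivity
    have := mul_le_mul_of_nonneg_left hle h1.le
    simp only [hr]; linarith
  have hterm2 : ∀ i : Fin n, Tendsto (fun k => z k - x k i) atTop (nhds 0) := by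
    intro i
    apply tendsto_zero_of_norm_sq
    apply extract ξ₂ h2 _ (fun k => by positivity)
    intro k
    have hle : ‖z k - x k i‖ ^ 2 ≤ ∑ j, ‖z k - x k j‖ ^ 2 :=
      Finset.single_le_sum (f := fun j => ‖z k - x k j‖ ^ 2)
        (fun j _ => by positivity) (Finset.mem_univ i)
    have h1' := mul_nonneg h1.le (hs1 k)
    have h3' : (0:ℝ) ≤ ξ₃ * ‖B (z k) - w k (Fin.last n)‖ ^ 2 := by positivity
    have := mul_le_mul_of_nonneg_left hle h2.le
    simp only [hr]; linarith
  have hterm3 : Tendsto (fun k => B (z k) - w k (Fin.last n)) atTop (nhds 0) := by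
    apply tendsto_zero_of_norm_sq
    apply extract ξ₃ h3 _ (fun k => by positivity)
    intro k
    have h1' := mul_nonneg h1.le (hs1 k)
    have h2' := mul_nonneg h2.le (hs2 k)
    simp only [hr]; linarith
  have hy' : ∀ i : Fin n, Tendsto (fun k => y k i) atTop (nhds (what i.castSucc)) := by
    intro i
    have := (hterm1 i).add (hwconv i.castSucc)
    simpa using this
  have hx' : ∀ i : Fin n, Tendsto (fun k => x k i) atTop (nhds zhat) := by
    intro i
    have := hz.sub (hterm2 i)
    simpa using this
  have hBlim : Tendsto (fun k => B (z k)) atTop (nhds (what (Fin.last n))) := by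
    have := hterm3.add (hwconv (Fin.last n))
    simp only [sub_add_cancel, zero_add] at this
    exact this
  have hBz : Tendsto (fun k => B (z k)) atTop (nhds (B zhat)) :=
    (hBc.tendsto zhat).comp hz
  have hlast : what (Fin.last n) = B zhat := tendsto_nhds_unique hBlim hBz
  have hsum : ∑ i, what i = 0 := by
    have hlim : Tendsto (fun k => ∑ i, w k i) atTop (nhds (∑ i, what i)) :=
      tendsto_finset_sum _ fun i _ => hwconv i
    have hlim0 : Tendsto (fun k => ∑ i, w k i) atTop (nhds 0) := by
      simpa [hw] using (tendsto_const_nhds : Tendsto (fun _ : ℕ => (0 : Ed d)) atTop (nhds 0))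
    exact tendsto_nhds_unique hlim hlim0
  exact ⟨fun i => maximal_closed_graph (hA i) (fun k => hxy k i) (hx' i) (hy' i), hlast, hsum⟩
end
end

section
/- Let (Ω, 𝔄, P) be a probability space, let (p^k)_{k≥1} be a sequence of ℝ^d-valued random variables, let 𝔉_k = σ(p^1, …, p^k), and let F be a nonempty closed subset of ℝ^d. Suppose that for every p ∈ F there exist nonnegative real sequences (χ^k(p))_k and (η^k(p))_k with Σ_k χ^k(p) < ∞ and Σ_k η^k(p) < ∞, and nonnegative 𝔉_k-measurable random variables ν^k(p), such that for all k, E[‖p^{k+1} − p‖² | 𝔉_k] ≤ (1 + χ^k(p)) ‖p^k − p‖² − ν^k(p) + η^k(p) almost surely. Then: (1) for every p ∈ F, Σ_k ν^k(p) < ∞ almost surely; (2) the sequence (p^k) is bounded almost surely; (3) there is an event Ω̃ with P[Ω̃] = 1 such that for every ω ∈ Ω̃ and every p ∈ F, the sequence (‖p^k(ω) − p‖)_k converges. -/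
/-!
For fixed `q ∈ F`, `V k = ‖p k - q‖²` is an almost supermartingale in the sense of
Robbins–Siegmund. Dividing by `∏_{j<k} (1 + χ j)` removes the multiplicative factor, and adding
the accumulated `ν` and the not yet spent tail of `η` turns it into a nonnegative supermartingale,
which converges almost surely. This gives (1), the almost sure convergence of `‖p k - q‖`, and
hence (2). For (3) the exceptional null sets are collected only over a countable dense subset of
`F`: since `q ↦ ‖p k ω - q‖` is 1-Lipschitz uniformly in `k`, convergence extends to its closure.
-/

open MeasureTheory Filter
open scoped BigOperators

noncomputable section

open Topology

namespace MeasureTheory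

variable {Ω : Type*} {m0 : MeasurableSpace Ω} {μ : Measure Ω} [IsFiniteMeasure μ]
  {ℱ : Filtration ℕ m0}

theorem Supermartingale.exists_ae_tendsto_of_nonneg {f : ℕ → Ω → ℝ}
    (hf : Supermartingale f ℱ μ) (hf0 : ∀ n, 0 ≤ᵐ[μ] f n) :
    ∀ᵐ ω ∂μ, ∃ c, Tendsto (fun n => f n ω) atTop (𝓝 c) := by
  have hbdd : ∀ n, eLpNorm ((-f) n) 1 μ ≤ (∫ ω, f 0 ω ∂μ).toNNReal := by
    intro n
    have hnorm : ∫ ω, ‖f n ω‖ ∂μ = ∫ ω, f n ω ∂μ :=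
      integral_congr_ae ((hf0 n).mono fun ω h => Real.norm_of_nonneg h)
    rw [Pi.neg_apply, eLpNorm_neg, eLpNorm_one_eq_lintegral_enorm,
      ← ofReal_integral_norm_eq_lintegral_enorm (hf.integrable n), hnorm]
    exact ENNReal.ofReal_le_ofReal
      (by simpa using hf.setIntegral_le (Nat.zero_le n) MeasurableSet.univ)
  filter_upwards [hf.neg.exists_ae_tendsto_of_bdd hbdd] with ω ⟨c, hc⟩
  exact ⟨-c, by simpa using hc.neg⟩

lemma condExp_add_of_stronglyMeasurable_right {m : MeasurableSpace Ω} (hm : m ≤ m0)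
    {f g : Ω → ℝ} (hf : Integrable f μ) (hg : StronglyMeasurable[m] g) (hgi : Integrable g μ) :
    μ[f + g | m] =ᵐ[μ] μ[f | m] + g := by
  filter_upwards [condExp_add hf hgi m] with ω h
  rw [h, Pi.add_apply, Pi.add_apply, condExp_of_stronglyMeasurable hm hg hgi]

variable {V w : ℕ → Ω → ℝ} {e : ℕ → ℝ}

theorem ae_summable_tendsto_of_condExp_le_sub_add
    (hV0 : ∀ n ω, 0 ≤ V n ω) (hV : StronglyAdapted ℱ V) (hVi : ∀ n, Integrable (V n) μ)
    (hw0 : ∀ n ω, 0 ≤ w n ω) (hw : StronglyAdapted ℱ w) (hwi : ∀ n, Integrable (w n) μ)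
    (he0 : ∀ n, 0 ≤ e n) (he : Summable e)
    (hrec : ∀ n, ∀ᵐ ω ∂μ, μ[V (n + 1) | ℱ n] ω ≤ V n ω - w n ω + e n) :
    ∀ᵐ ω ∂μ, Summable (fun n => w n ω) ∧ ∃ l, Tendsto (fun n => V n ω) atTop (𝓝 l) := by
  -- `V` plus the accumulated `w` plus the unspent tail of `e`: a nonnegative supermartingale
  set S : ℕ → Ω → ℝ := fun n ω => ∑ j ∈ Finset.range n, (w j ω - e j) + ∑' j, e j with hS
  set M : ℕ → Ω → ℝ := fun n => V n + S n with hM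
  have hS_adapted : ∀ n j, n ≤ j + 1 → StronglyMeasurable[ℱ j] (S n) := fun n j hnj =>
    (Finset.stronglyMeasurable_fun_sum _ fun i hi =>
      (((hw i).mono (ℱ.mono (by simp at hi; omega))).sub stronglyMeasurable_const)).add
      stronglyMeasurable_const
  have hSi : ∀ n, Integrable (S n) μ := fun n =>
    (integrable_finsetSum _ fun i _ => (hwi i).sub (integrable_const _)).add (integrable_const _)
  have hw_le_S : ∀ n ω, ∑ j ∈ Finset.range n, w j ω ≤ S n ω := fun n ω => by
    have := he.sum_le_tsum (Finset.range n) (fun j _ => he0 j)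
    simp only [hS, Finset.sum_sub_distrib]
    linarith
  have hsuper : Supermartingale M ℱ μ := by
    refine supermartingale_nat (fun n => (hV n).add (hS_adapted n n (by omega)))
      (fun n => (hVi n).add (hSi n)) fun n => ?_
    filter_upwards [condExp_add_of_stronglyMeasurable_right (ℱ.le n) (hVi (n + 1))
      (hS_adapted (n + 1) n le_rfl) (hSi (n + 1)), hrec n] with ω hω hωrec
    change μ[V (n + 1) + S (n + 1) | ℱ n] ω ≤ V n ω + S n ω
    rw [hω]
    simp only [Pi.add_apply, hS, Finset.sum_range_succ]
    linarith
  have hM0 : ∀ n, 0 ≤ᵐ[μ] M n := fun n => ae_of_all _ fun ω =>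
    add_nonneg (hV0 n ω) ((Finset.sum_nonneg fun j _ => hw0 j ω).trans (hw_le_S n ω))
  filter_upwards [hsuper.exists_ae_tendsto_of_nonneg hM0] with ω ⟨c, hc⟩
  obtain ⟨B, hB⟩ := hc.bddAbove_range
  have hw_sum : Summable (fun n => w n ω) := summable_of_sum_range_le (hw0 · ω) fun n =>
    ((hw_le_S n ω).trans (le_add_of_nonneg_left (hV0 n ω))).trans (hB ⟨n, rfl⟩)
  have hS_lim : Tendsto (fun n => S n ω) atTop (𝓝 (∑' j, (w j ω - e j) + ∑' j, e j)) :=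
    (hw_sum.sub he).hasSum.tendsto_sum_nat.add_const _
  exact ⟨hw_sum, _, by simpa [hM] using hc.sub hS_lim⟩

theorem ae_summable_tendsto_of_condExp_le_mul_sub_add {c : ℕ → ℝ}
    (hV0 : ∀ n ω, 0 ≤ V n ω) (hV : StronglyAdapted ℱ V) (hVi : ∀ n, Integrable (V n) μ)
    (hw0 : ∀ n ω, 0 ≤ w n ω) (hw : StronglyAdapted ℱ w) (hwi : ∀ n, Integrable (w n) μ)
    (hc0 : ∀ n, 0 ≤ c n) (hc : Summable c) (he0 : ∀ n, 0 ≤ e n) (he : Summable e)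
    (hrec : ∀ n, ∀ᵐ ω ∂μ, μ[V (n + 1) | ℱ n] ω ≤ (1 + c n) * V n ω - w n ω + e n) :
    ∀ᵐ ω ∂μ, Summable (fun n => w n ω) ∧ ∃ l, Tendsto (fun n => V n ω) atTop (𝓝 l) := by
  set α : ℕ → ℝ := fun n => ∏ j ∈ Finset.range n, (1 + c j)
  have hα_one : ∀ n, 1 ≤ α n := fun n =>
    Finset.one_le_prod fun j _ => le_add_of_nonneg_right (hc0 j)
  have hα_pos : ∀ n, 0 < α n := fun n => one_pos.trans_le (hα_one n)
  obtain ⟨A, hA⟩ : ∃ A, Tendsto α atTop (𝓝 A) :=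
    ⟨_, (Real.multipliable_one_add_of_summable hc).tendsto_prod_tprod_nat⟩
  -- dividing by `α (n + 1) = α n * (1 + c n)` absorbs the factor `1 + c n`
  have hrec' : ∀ n, ∀ᵐ ω ∂μ, μ[(α (n + 1))⁻¹ • V (n + 1) | ℱ n] ω ≤
      (α n)⁻¹ * V n ω - (α (n + 1))⁻¹ * w n ω + (α (n + 1))⁻¹ * e n := by
    intro n
    filter_upwards [condExp_smul (α (n + 1))⁻¹ (V (n + 1)) (ℱ n), hrec n] with ω hω hωrec
    have hα_succ : α (n + 1) = α n * (1 + c n) := Finset.prod_range_succ _ _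
    have h1c : 1 + c n ≠ 0 := by linarith [hc0 n]
    rw [hω, Pi.smul_apply, smul_eq_mul]
    calc (α (n + 1))⁻¹ * μ[V (n + 1) | ℱ n] ω
        ≤ (α (n + 1))⁻¹ * ((1 + c n) * V n ω - w n ω + e n) :=
          mul_le_mul_of_nonneg_left hωrec (inv_nonneg.2 (hα_pos _).le)
      _ = _ := by rw [hα_succ]; field_simp
  have hscaled := ae_summable_tendsto_of_condExp_le_sub_add
    (V := fun n => (α n)⁻¹ • V n) (w := fun n => (α (n + 1))⁻¹ • w n)
    (e := fun n => (α (n + 1))⁻¹ * e n)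
    (fun n ω => mul_nonneg (inv_nonneg.2 (hα_pos n).le) (hV0 n ω))
    (fun n => (hV n).const_smul _) (fun n => (hVi n).smul _)
    (fun n ω => mul_nonneg (inv_nonneg.2 (hα_pos _).le) (hw0 n ω))
    (fun n => (hw n).const_smul _) (fun n => (hwi n).smul _)
    (fun n => mul_nonneg (inv_nonneg.2 (hα_pos _).le) (he0 n))
    (he.of_nonneg_of_le (fun n => mul_nonneg (inv_nonneg.2 (hα_pos _).le) (he0 n))
      fun n => mul_le_of_le_one_left (he0 n) (inv_le_one_of_one_le₀ (hα_one _))) hrec'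
  obtain ⟨B, hB⟩ := hA.bddAbove_range
  filter_upwards [hscaled] with ω ⟨hw_sum, l, hl⟩
  refine ⟨(hw_sum.mul_left B).of_nonneg_of_le (hw0 · ω) fun n => ?_, l * A, ?_⟩
  · calc w n ω = α (n + 1) * ((α (n + 1))⁻¹ • w n) ω := by
          rw [Pi.smul_apply, smul_eq_mul, mul_inv_cancel_left₀ (hα_pos _).ne']
      _ ≤ B * ((α (n + 1))⁻¹ • w n) ω :=
          mul_le_mul_of_nonneg_right (hB ⟨n + 1, rfl⟩)
            (mul_nonneg (inv_nonneg.2 (hα_pos _).le) (hw0 n ω))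
  · refine (hl.mul hA).congr fun n => ?_
    rw [Pi.smul_apply, smul_eq_mul]
    field_simp [(hα_pos n).ne']

end MeasureTheory

section QuasiFejer

variable {E : Type*} [SeminormedAddCommGroup E] {x : ℕ → E}

lemma exists_norm_le_of_tendsto_norm_sub {q : E} {l : ℝ}
    (h : Tendsto (fun k => ‖x k - q‖) atTop (𝓝 l)) : ∃ M, ∀ k, ‖x k‖ ≤ M := by
  obtain ⟨C, hC⟩ := h.bddAbove_range
  exact ⟨‖q‖ + C, fun k => (norm_le_insert' (x k) q).trans (add_le_add_right (hC ⟨k, rfl⟩) _)⟩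

lemma exists_tendsto_norm_sub_of_mem_closure {D : Set E}
    (hD : ∀ q ∈ D, ∃ l, Tendsto (fun k => ‖x k - q‖) atTop (𝓝 l)) {q : E} (hq : q ∈ closure D) :
    ∃ l, Tendsto (fun k => ‖x k - q‖) atTop (𝓝 l) := by
  refine cauchySeq_tendsto_of_complete (Metric.cauchySeq_iff.2 fun ε hε => ?_)
  obtain ⟨q', hq'D, hqq'⟩ := Metric.mem_closure_iff.1 hq (ε / 3) (by positivity)
  obtain ⟨l', hl'⟩ := hD q' hq'D
  obtain ⟨N, hN⟩ := Metric.cauchySeq_iff.1 hl'.cauchySeq (ε / 3) (by positivity)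
  have hclose : ∀ k, dist ‖x k - q‖ ‖x k - q'‖ ≤ dist q q' := fun k => by
    simpa [sub_sub_sub_cancel_left, dist_eq_norm, norm_sub_rev] using
      dist_norm_norm_le (x k - q) (x k - q')
  refine ⟨N, fun m hm n hn => ?_⟩
  calc dist ‖x m - q‖ ‖x n - q‖
      ≤ dist ‖x m - q‖ ‖x m - q'‖ + dist ‖x m - q'‖ ‖x n - q'‖ + dist ‖x n - q'‖ ‖x n - q‖ :=
        dist_triangle4 _ _ _ _
    _ < ε / 3 + ε / 3 + ε / 3 := by
        gcongr
        · exact (hclose m).trans_lt hqq'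
        · exact hN m hm n hn
        · rw [dist_comm]
          exact (hclose n).trans_lt hqq'
    _ = ε := by ring

lemma exists_prob_eq_one_forall_tendsto_norm_sub {Ω : Type*} [MeasurableSpace Ω]
    {P : Measure Ω} [IsProbabilityMeasure P] {x : ℕ → Ω → E} {S : Set E}
    (hS : TopologicalSpace.IsSeparable S)
    (h : ∀ q ∈ S, ∀ᵐ ω ∂P, ∃ l, Tendsto (fun k => ‖x k ω - q‖) atTop (𝓝 l)) :
    ∃ Ωt : Set Ω, P Ωt = 1 ∧ ∀ ω ∈ Ωt, ∀ q ∈ S,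
      ∃ l, Tendsto (fun k => ‖x k ω - q‖) atTop (𝓝 l) := by
  obtain ⟨D, hDS, hDc, hSD⟩ := hS.exists_countable_dense_subset
  have hae : ∀ᵐ ω ∂P, ∀ q ∈ D, ∃ l, Tendsto (fun k => ‖x k ω - q‖) atTop (𝓝 l) :=
    (ae_ball_iff hDc).2 fun q hq => h q (hDS hq)
  exact ⟨{ω | ∀ q ∈ D, ∃ l, Tendsto (fun k => ‖x k ω - q‖) atTop (𝓝 l)},
    (measure_congr (ae_eq_univ.2 (mem_ae_iff.1 hae))).trans measure_univ,
    fun ω hω q hq => exists_tendsto_norm_sub_of_mem_closure hω (hSD hq)⟩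

end QuasiFejer

/-- `n ↦ 𝔉_{n+1}`, so that the filtration of the paper starts at index `0`. -/
def succNaturalFiltration {Ω β : Type*} {m0 : MeasurableSpace Ω} [mβ : MeasurableSpace β]
    (u : ℕ → Ω → β) (hu : ∀ k, Measurable (u k)) : Filtration ℕ m0 where
  seq n := ⨆ j ∈ Set.Icc 1 (n + 1), MeasurableSpace.comap (u j) mβ
  mono' _ _ h := biSup_mono (Set.Icc_subset_Icc_right (by omega))
  le' _ := iSup₂_le fun j _ => (hu j).comap_le

lemma measurable_succNaturalFiltration {Ω β : Type*} {m0 : MeasurableSpace Ω}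
    [mβ : MeasurableSpace β] (u : ℕ → Ω → β) (hu : ∀ k, Measurable (u k)) (n : ℕ) :
    Measurable[succNaturalFiltration u hu n] (u (n + 1)) :=
  measurable_iff_comap_le.2 <| le_iSup₂ (f := fun j (_ : j ∈ Set.Icc 1 (n + 1)) =>
    MeasurableSpace.comap (u j) mβ) (n + 1) ⟨by omega, le_rfl⟩

theorem stochastic_quasi_fejer_general {d : ℕ} {Ω : Type} [MeasurableSpace Ω]
    (P : Measure Ω) [IsProbabilityMeasure P]
    (p : ℕ → Ω → Ed d) (hpm : ∀ k, Measurable (p k))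
    (F : ℕ → MeasurableSpace Ω)
    (hF : ∀ k, F k = ⨆ j ∈ Set.Icc 1 k, MeasurableSpace.comap (p j) inferInstance)
    (Fs : Set (Ed d)) (hFne : Fs.Nonempty)
    (χ η : Ed d → ℕ → ℝ) (ν : Ed d → ℕ → Ω → ℝ)
    (hχ0 : ∀ q ∈ Fs, ∀ k, 0 ≤ χ q k) (hη0 : ∀ q ∈ Fs, ∀ k, 0 ≤ η q k)
    (hχs : ∀ q ∈ Fs, Summable (fun k : ℕ => χ q (k + 1)))
    (hηs : ∀ q ∈ Fs, Summable (fun k : ℕ => η q (k + 1)))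
    (hν0 : ∀ q ∈ Fs, ∀ k ω, 0 ≤ ν q k ω)
    (hνm : ∀ q ∈ Fs, ∀ k, 1 ≤ k → Measurable[F k] (ν q k))
    (hint : ∀ q ∈ Fs, ∀ k, 1 ≤ k → Integrable (fun ω => ‖p k ω - q‖ ^ 2) P)
    (hνint : ∀ q ∈ Fs, ∀ k, 1 ≤ k → Integrable (ν q k) P)
    (hrec : ∀ q ∈ Fs, ∀ k, 1 ≤ k → ∀ᵐ ω ∂P,
      (P[fun ω' => ‖p (k + 1) ω' - q‖ ^ 2 | F k]) ω
        ≤ (1 + χ q k) * ‖p k ω - q‖ ^ 2 - ν q k ω + η q k) :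
    (∀ q ∈ Fs, ∀ᵐ ω ∂P, Summable (fun k : ℕ => ν q (k + 1) ω))
    ∧ (∀ᵐ ω ∂P, ∃ M : ℝ, ∀ k, 1 ≤ k → ‖p k ω‖ ≤ M)
    ∧ ∃ Ωt : Set Ω, P Ωt = 1 ∧ ∀ ω ∈ Ωt, ∀ q ∈ Fs,
        ∃ l : ℝ, Tendsto (fun k => ‖p k ω - q‖) atTop (nhds l) := by
  have hG : ∀ n, F (n + 1) = succNaturalFiltration p hpm n := fun n => hF (n + 1)
  have hfejer : ∀ q ∈ Fs, ∀ᵐ ω ∂P, Summable (fun k => ν q (k + 1) ω) ∧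
      ∃ l, Tendsto (fun k => ‖p (k + 1) ω - q‖ ^ 2) atTop (𝓝 l) := fun q hq =>
    ae_summable_tendsto_of_condExp_le_mul_sub_add (ℱ := succNaturalFiltration p hpm)
      (fun _ _ => sq_nonneg _)
      (fun n => ((continuous_id.sub continuous_const).norm.pow 2).measurable.comp
        (measurable_succNaturalFiltration p hpm n) |>.stronglyMeasurable)
      (fun _ => hint q hq _ (by omega)) (fun _ => hν0 q hq _)
      (fun n => (hG n ▸ hνm q hq _ (by omega)).stronglyMeasurable)
      (fun _ => hνint q hq _ (by omega))
      (fun _ => hχ0 q hq _) (hχs q hq) (fun _ => hη0 q hq _) (hηs q hq)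
      (fun n => hG n ▸ hrec q hq _ (by omega))
  have hdist : ∀ q ∈ Fs, ∀ᵐ ω ∂P, ∃ l, Tendsto (fun k => ‖p k ω - q‖) atTop (𝓝 l) :=
    fun q hq => (hfejer q hq).mono fun ω ⟨_, l, hl⟩ =>
      ⟨√l, (tendsto_add_atTop_iff_nat 1).1 (by simpa using hl.sqrt)⟩
  obtain ⟨q₀, hq₀⟩ := hFne
  refine ⟨fun q hq => (hfejer q hq).mono fun _ h => h.1, ?_,
    exists_prob_eq_one_forall_tendsto_norm_sub (.of_separableSpace Fs) hdist⟩
  filter_upwards [hdist q₀ hq₀] with ω ⟨_, hl⟩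
  obtain ⟨M, hM⟩ := exists_norm_le_of_tendsto_norm_sub hl
  exact ⟨M, fun k _ => hM k⟩

/-- stochastic quasi-Fejér monotonicity (Combettes–Pesquet, Prop. 2.3). -/
theorem stochastic_quasi_fejer {d : ℕ} {Ω : Type} [MeasurableSpace Ω]
    (P : Measure Ω) [IsProbabilityMeasure P]
    (p : ℕ → Ω → Ed d) (hpm : ∀ k, Measurable (p k))
    (F : ℕ → MeasurableSpace Ω)
    (hF : ∀ k, F k = ⨆ j ∈ Set.Icc 1 k, MeasurableSpace.comap (p j) inferInstance)
    (Fs : Set (Ed d)) (hFne : Fs.Nonempty) (hFc : IsClosed Fs)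
    (χ η : Ed d → ℕ → ℝ) (ν : Ed d → ℕ → Ω → ℝ)
    (hχ0 : ∀ q ∈ Fs, ∀ k, 0 ≤ χ q k) (hη0 : ∀ q ∈ Fs, ∀ k, 0 ≤ η q k)
    (hχs : ∀ q ∈ Fs, Summable (fun k : ℕ => χ q (k + 1)))
    (hηs : ∀ q ∈ Fs, Summable (fun k : ℕ => η q (k + 1)))
    (hν0 : ∀ q ∈ Fs, ∀ k ω, 0 ≤ ν q k ω)
    (hνm : ∀ q ∈ Fs, ∀ k, 1 ≤ k → Measurable[F k] (ν q k))
    (hint : ∀ q ∈ Fs, ∀ k, 1 ≤ k → Integrable (fun ω => ‖p k ω - q‖ ^ 2) P)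
    (hνint : ∀ q ∈ Fs, ∀ k, 1 ≤ k → Integrable (ν q k) P)
    (hrec : ∀ q ∈ Fs, ∀ k, 1 ≤ k → ∀ᵐ ω ∂P,
      (P[fun ω' => ‖p (k + 1) ω' - q‖ ^ 2 | F k]) ω
        ≤ (1 + χ q k) * ‖p k ω - q‖ ^ 2 - ν q k ω + η q k) :
    (∀ q ∈ Fs, ∀ᵐ ω ∂P, Summable (fun k : ℕ => ν q (k + 1) ω))
    ∧ (∀ᵐ ω ∂P, ∃ M : ℝ, ∀ k, 1 ≤ k → ‖p k ω‖ ≤ M)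
    ∧ ∃ Ωt : Set Ω, P Ωt = 1 ∧ ∀ ω ∈ Ωt, ∀ q ∈ Fs,
        ∃ l : ℝ, Tendsto (fun k => ‖p k ω - q‖) atTop (nhds l) :=
  stochastic_quasi_fejer_general P p hpm F hF Fs hFne χ η ν hχ0 hη0 hχs hηs hν0 hνm hint hνint hrec
end
end

section
/- Under the SPS setup, suppose additionally that ρ_k ≤ ρ̄ for all k. Then for every p* = (z*, w_1*, …, w_{n+1}*) ∈ S and every k, almost surely E[ ‖Σ_{i=1}^{n+1} y_i^k‖² + Σ_{i=1}^{n+1} ‖x_i^k − (1/(n+1)) Σ_{j=1}^{n+1} x_j^k‖² | 𝔉_k ] ≤ C₁ ‖p^k − p*‖² + C₂. -/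
/-!
Fix `p* = (z*, w*) ∈ S`. Each backward step is firmly nonexpansive: monotonicity of `Aᵢ` at
`(xᵢ, yᵢ)` and `(z*, wᵢ*)` gives `‖xᵢ - z*‖² + τ²‖yᵢ - wᵢ*‖² ≤ ‖z - z* + τ (wᵢ - wᵢ*)‖²`. The
forward step moves `x_{n+1}` at most `ρ̄ (L‖z - z*‖ + ‖ε‖ + ‖w_{n+1} - B z*‖)` further from `z*`
than `z`. Since `∑ wᵢ* = 0` and `w_{n+1}* = B z*`, we have
`∑ yᵢ = ∑_{i ≤ n} (yᵢ - wᵢ*) + (B x_{n+1} - B z*) + e`, and the spread of the `xᵢ` about their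
mean is at most their spread about `z*`. Hence the quantity is bounded pointwise in terms of
`‖p - p*‖²`, `‖ε‖²` and `‖e‖²`. Conditioning on `𝔉_k`, the variance bound for `e` (pulled down
from `σ(𝔉_k, ε)` by the tower property) and the one for `ε` leave only `‖B z‖²`, and
`‖B z‖² ≤ 2‖B z*‖² + 2L²‖z - z*‖²`; collecting coefficients gives `C₁` and `C₂`.
-/

open MeasureTheory Filter
open scoped RealInnerProductSpace BigOperators NNReal

noncomputable section

/-- Squared Euclidean distance `‖p - q‖²` in the product space `ℝ^{(n+2)d}`, for
`p = (z, w₁, …, w_{n+1})` and `q`. -/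
def pDistSq {d n : ℕ} (z : Ed d) (w : Fin (n + 1) → Ed d)
    (q : Ed d × (Fin (n + 1) → Ed d)) : ℝ :=
  ‖z - q.1‖ ^ 2 + ∑ i, ‖w i - q.2 i‖ ^ 2

/-- The σ-algebra `𝔉_k = σ(p¹, …, p^k)` generated by the first `k` SPS iterates. -/
def spsSigma {d n : ℕ} {Ω : Type} [MeasurableSpace Ω]
    (z : ℕ → Ω → Ed d) (w : ℕ → Fin (n + 1) → Ω → Ed d) (k : ℕ) : MeasurableSpace Ω :=
  ⨆ j ∈ Set.Icc 1 k,
    MeasurableSpace.comap (fun ω => (z j ω, fun i => w j i ω)) inferInstance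

/-- The constant `C₁`. -/
def spsC1 (n : ℕ) (τ L N ρb : ℝ) : ℝ :=
  24 * (1 + 10 * ρb ^ 2) * ((n : ℝ) + 1) * (L ^ 2 + 1) ^ 2 * (N + 1) ^ 2
    + 8 * ((n : ℝ) + 1) * (2 * τ ^ 2 + 6 * ((n : ℝ) + 1) + 1 + 3 * ((n : ℝ) + 1) ^ 2 / τ ^ 2)

/-- The constant `C₂`; here `Bz = B(z*)` and `sw = ∑_{i=1}^n wᵢ*`. -/
def spsC2 {d : ℕ} (n : ℕ) (L N ρb : ℝ) (Bz sw : Ed d) : ℝ :=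
  16 * (N + 1) * (1 + 4 * ρb ^ 2 * ((n : ℝ) + 1) + 9 * ρb ^ 2 * L ^ 2 * (N + 1)) * ‖Bz‖ ^ 2
    + 8 * ‖sw‖ ^ 2 + 12 * ρb ^ 2 * N * (2 * L ^ 2 * (N + 1) + (n : ℝ) + 1) + 4 * N

/-- The constant `C₃`. -/
def spsC3 (L N : ℝ) : ℝ := 4 * N * L ^ 3

/-- The constant `C₄`; here `Bz = B(z*)`. -/
def spsC4 {d : ℕ} (L N : ℝ) (Bz : Ed d) : ℝ := 2 * N * L * (1 + 2 * ‖Bz‖ ^ 2)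

section Deterministic

variable {E : Type*} [NormedAddCommGroup E]

lemma norm_add_sq_le_two_mul (u v : E) : ‖u + v‖ ^ 2 ≤ 2 * (‖u‖ ^ 2 + ‖v‖ ^ 2) :=
  (pow_le_pow_left₀ (norm_nonneg _) (norm_add_le u v) 2).trans add_sq_le

lemma norm_sq_le_of_lipschitz {B : E → E} {L : ℝ} (hB : ∀ u v, ‖B u - B v‖ ≤ L * ‖u - v‖)
    (u v : E) : ‖B u‖ ^ 2 ≤ 2 * ‖B v‖ ^ 2 + 2 * L ^ 2 * ‖u - v‖ ^ 2 := by
  have h := norm_add_sq_le_two_mul (B v) (B u - B v)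
  rw [add_sub_cancel] at h
  nlinarith [pow_le_pow_left₀ (norm_nonneg _) (hB u v) 2]

lemma sps_norm_sum_sq_le {n : ℕ} {L : ℝ} {B : E → E} (hB : ∀ u v, ‖B u - B v‖ ≤ L * ‖u - v‖)
    {x y ws : Fin (n + 1) → E} {zs e : E} (hwsum : ∑ i, ws i = 0)
    (hwlast : ws (Fin.last n) = B zs) (hyl : y (Fin.last n) = B (x (Fin.last n)) + e) :
    ‖∑ i, y i‖ ^ 2 ≤ 3 * n * ∑ i : Fin n, ‖y i.castSucc - ws i.castSucc‖ ^ 2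
      + 3 * L ^ 2 * ‖x (Fin.last n) - zs‖ ^ 2 + 3 * ‖e‖ ^ 2 := by
  set s := ∑ i : Fin n, ‖y i.castSucc - ws i.castSucc‖
  have hsplit : ∑ i, y i
      = ∑ i : Fin n, (y i.castSucc - ws i.castSucc) + ((B (x (Fin.last n)) - B zs) + e) := by
    rw [← sub_zero (∑ i, y i), ← hwsum, ← Finset.sum_sub_distrib, Fin.sum_univ_castSucc, hyl,
      hwlast]
    abel
  have hnorm : ‖∑ i, y i‖ ≤ s + L * ‖x (Fin.last n) - zs‖ + ‖e‖ := by
    rw [hsplit, add_assoc]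
    exact (norm_add_le _ _).trans (add_le_add (norm_sum_le _ _)
      ((norm_add_le _ _).trans (add_le_add (hB _ _) le_rfl)))
  have hcs : s ^ 2 ≤ n * ∑ i : Fin n, ‖y i.castSucc - ws i.castSucc‖ ^ 2 := by
    simpa using sq_sum_le_card_mul_sum_sq (s := Finset.univ)
      (f := fun i : Fin n => ‖y i.castSucc - ws i.castSucc‖)
  have := pow_le_pow_left₀ (norm_nonneg _) hnorm 2
  nlinarith [sq_nonneg (s - L * ‖x (Fin.last n) - zs‖), sq_nonneg (s - ‖e‖),
    sq_nonneg (L * ‖x (Fin.last n) - zs‖ - ‖e‖)]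

variable [InnerProductSpace ℝ E]

lemma norm_sq_add_norm_sub_sq_le {u x : E} (h : 0 ≤ ⟪u - x, x⟫) :
    ‖x‖ ^ 2 + ‖u - x‖ ^ 2 ≤ ‖u‖ ^ 2 := by
  have h' : ‖x + (u - x)‖ ^ 2 = ‖x‖ ^ 2 + 2 * ⟪x, u - x⟫ + ‖u - x‖ ^ 2 := norm_add_sq_real _ _
  rw [add_sub_cancel, real_inner_comm] at h'
  linarith

/-- Here `x = J_{τA}(z + τ w)`, and `hmono` is monotonicity of `A` at
`(x, τ⁻¹ (z + τ w - x))` and `(zs, ws)`. -/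
lemma resolvent_step_sq_le {τ : ℝ} (hτ : 0 < τ) {z w x zs ws : E}
    (hmono : 0 ≤ ⟪τ⁻¹ • (z + τ • w - x) - ws, x - zs⟫) :
    ‖x - zs‖ ^ 2 + τ ^ 2 * ‖τ⁻¹ • (z + τ • w - x) - ws‖ ^ 2
      ≤ 2 * ‖z - zs‖ ^ 2 + 2 * τ ^ 2 * ‖w - ws‖ ^ 2 := by
  set u := (z - zs) + τ • (w - ws)
  have hux : u - (x - zs) = τ • (τ⁻¹ • (z + τ • w - x) - ws) := by
    rw [smul_sub, smul_smul, mul_inv_cancel₀ hτ.ne', one_smul]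
    module
  have hfirm := norm_sq_add_norm_sub_sq_le (u := u) (x := x - zs) (by
    rw [hux, real_inner_smul_left]; positivity)
  have hu := norm_add_sq_le_two_mul (z - zs) (τ • (w - ws))
  rw [hux, norm_smul, mul_pow, Real.norm_eq_abs, sq_abs] at hfirm
  rw [norm_smul, mul_pow, Real.norm_eq_abs, sq_abs] at hu
  linarith

lemma forward_step_sq_le {B : E → E} {L ρ ρb : ℝ}
    (hB : ∀ u v, ‖B u - B v‖ ≤ L * ‖u - v‖) (hρ : 0 ≤ ρ) (hρb : ρ ≤ ρb) (z zs w ε : E) :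
    ‖z - ρ • (B z + ε - w) - zs‖ ^ 2
      ≤ 3 * (1 + ρb * L) ^ 2 * ‖z - zs‖ ^ 2 + 3 * ρb ^ 2 * ‖w - B zs‖ ^ 2
        + 3 * ρb ^ 2 * ‖ε‖ ^ 2 := by
  have hsplit : z - ρ • (B z + ε - w) - zs
      = (z - zs) - ρ • ((B z - B zs) + ε - (w - B zs)) := by module
  have hnorm : ‖z - ρ • (B z + ε - w) - zs‖
      ≤ (1 + ρb * L) * ‖z - zs‖ + ρb * ‖ε‖ + ρb * ‖w - B zs‖ := by
    have h1 : ‖(B z - B zs) + ε - (w - B zs)‖ ≤ L * ‖z - zs‖ + ‖ε‖ + ‖w - B zs‖ :=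
      (norm_sub_le _ _).trans (by linarith [norm_add_le (B z - B zs) ε, hB z zs])
    have h2 := mul_le_mul hρb h1 (norm_nonneg _) (hρ.trans hρb)
    rw [hsplit]
    refine (norm_sub_le _ _).trans ?_
    rw [norm_smul, Real.norm_eq_abs, abs_of_nonneg hρ]
    linarith
  have hsq := pow_le_pow_left₀ (norm_nonneg _) hnorm 2
  nlinarith [sq_nonneg ((1 + ρb * L) * ‖z - zs‖ - ρb * ‖ε‖),
    sq_nonneg ((1 + ρb * L) * ‖z - zs‖ - ρb * ‖w - B zs‖),
    sq_nonneg (ρb * ‖ε‖ - ρb * ‖w - B zs‖)]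

lemma sum_norm_sub_average_sq_le {ι : Type*} [Fintype ι] (v : ι → E) (c : E) :
    ∑ i, ‖v i - (Fintype.card ι : ℝ)⁻¹ • ∑ j, v j‖ ^ 2 ≤ ∑ i, ‖v i - c‖ ^ 2 := by
  rcases isEmpty_or_nonempty ι with hι | hι
  · simp
  set μ := (Fintype.card ι : ℝ)⁻¹ • ∑ j, v j
  have hcentered : ∑ i, (v i - μ) = 0 := by
    rw [Finset.sum_sub_distrib, Finset.sum_const, Finset.card_univ, ← Nat.cast_smul_eq_nsmul ℝ,
      smul_smul, mul_inv_cancel₀ (by positivity), one_smul, sub_self]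
  have hexpand : ∑ i, ‖v i - c‖ ^ 2
      = ∑ i, ‖v i - μ‖ ^ 2 + 2 * ⟪∑ i, (v i - μ), μ - c⟫
        + Fintype.card ι * ‖μ - c‖ ^ 2 := by
    have hterm : ∀ i, ‖v i - c‖ ^ 2 = ‖v i - μ‖ ^ 2 + 2 * ⟪v i - μ, μ - c⟫ + ‖μ - c‖ ^ 2 := by
      intro i
      rw [← norm_add_sq_real, sub_add_sub_cancel]
    simp only [hterm, Finset.sum_add_distrib, sum_inner, Finset.mul_sum, Finset.sum_const,
      Finset.card_univ, nsmul_eq_mul]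
  rw [hexpand, hcentered, inner_zero_left]
  nlinarith [sq_nonneg ‖μ - c‖, (Nat.cast_nonneg (Fintype.card ι) : (0:ℝ) ≤ _)]

lemma sps_gradient_sq_le {n : ℕ} {τ L : ℝ} (hτ : 0 < τ) {B : E → E}
    (hB : ∀ u v, ‖B u - B v‖ ≤ L * ‖u - v‖) {x y w ws : Fin (n + 1) → E} {z zs e : E}
    (hwsum : ∑ i, ws i = 0) (hwlast : ws (Fin.last n) = B zs)
    (hyl : y (Fin.last n) = B (x (Fin.last n)) + e)
    (hres : ∀ i : Fin n, ‖x i.castSucc - zs‖ ^ 2 + τ ^ 2 * ‖y i.castSucc - ws i.castSucc‖ ^ 2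
      ≤ 2 * ‖z - zs‖ ^ 2 + 2 * τ ^ 2 * ‖w i.castSucc - ws i.castSucc‖ ^ 2) :
    ‖∑ i, y i‖ ^ 2 + ∑ i, ‖x i - ((n : ℝ) + 1)⁻¹ • ∑ j, x j‖ ^ 2
      ≤ (6 * n ^ 2 / τ ^ 2 + 2 * n) * ‖z - zs‖ ^ 2
        + (6 * n + 2 * τ ^ 2) * ∑ i : Fin n, ‖w i.castSucc - ws i.castSucc‖ ^ 2
        + (3 * L ^ 2 + 1) * ‖x (Fin.last n) - zs‖ ^ 2 + 3 * ‖e‖ ^ 2 := by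
  set S := ∑ i : Fin n, ‖w i.castSucc - ws i.castSucc‖ ^ 2
  set X := ∑ i : Fin n, ‖x i.castSucc - zs‖ ^ 2
  set Y := ∑ i : Fin n, ‖y i.castSucc - ws i.castSucc‖ ^ 2
  have hsum : X + τ ^ 2 * Y ≤ 2 * (n * ‖z - zs‖ ^ 2) + 2 * τ ^ 2 * S := by
    simpa only [Finset.sum_add_distrib, ← Finset.mul_sum, Finset.sum_const, Finset.card_univ,
      Fintype.card_fin, nsmul_eq_mul] using Finset.sum_le_sum (s := Finset.univ) fun i _ => hres i
  have hX0 : 0 ≤ X := Finset.sum_nonneg fun _ _ => sq_nonneg _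
  have hY0 : 0 ≤ Y := Finset.sum_nonneg fun _ _ => sq_nonneg _
  have hX : X ≤ 2 * n * ‖z - zs‖ ^ 2 + 2 * τ ^ 2 * S := by
    nlinarith [mul_nonneg (sq_nonneg τ) hY0]
  have hY : Y ≤ 2 * n / τ ^ 2 * ‖z - zs‖ ^ 2 + 2 * S := by
    rw [div_mul_eq_mul_div, ← sub_le_iff_le_add, le_div_iff₀ (by positivity)]
    linarith
  have hdev : ∑ i, ‖x i - ((n : ℝ) + 1)⁻¹ • ∑ j, x j‖ ^ 2 ≤ X + ‖x (Fin.last n) - zs‖ ^ 2 :=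
    calc _ ≤ ∑ i, ‖x i - zs‖ ^ 2 := by simpa using sum_norm_sub_average_sq_le x zs
      _ = _ := Fin.sum_univ_castSucc _
  linear_combination sps_norm_sum_sq_le hB hwsum hwlast hyl + hdev + hX
    + 3 * mul_le_mul_of_nonneg_left hY (Nat.cast_nonneg n)

end Deterministic

lemma sps_step_sq_le {d n : ℕ} {τ L ρ ρb : ℝ} (hτ : 0 < τ) {A : Fin n → Ed d → Set (Ed d)}
    (hA : ∀ i, IsMonotoneOp (A i)) {B : Ed d → Ed d} (hB : ∀ u v, ‖B u - B v‖ ≤ L * ‖u - v‖)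
    (hρ : 0 ≤ ρ) (hρb : ρ ≤ ρb) {zs : Ed d} {ws : Fin (n + 1) → Ed d}
    (hps : (zs, ws) ∈ extSolSet A B) {z ε e : Ed d} {w x y : Fin (n + 1) → Ed d}
    (hyd : ∀ i : Fin n, y i.castSucc = τ⁻¹ • (z + τ • w i.castSucc - x i.castSucc))
    (hyres : ∀ i : Fin n, y i.castSucc ∈ A i (x i.castSucc))
    (hxl : x (Fin.last n) = z - ρ • (B z + ε - w (Fin.last n)))
    (hyl : y (Fin.last n) = B (x (Fin.last n)) + e) :
    ‖∑ i, y i‖ ^ 2 + ∑ i, ‖x i - ((n : ℝ) + 1)⁻¹ • ∑ j, x j‖ ^ 2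
        ≤ (6 * n ^ 2 / τ ^ 2 + 2 * n) * ‖z - zs‖ ^ 2
          + (6 * n + 2 * τ ^ 2) * ∑ i : Fin n, ‖w i.castSucc - ws i.castSucc‖ ^ 2
          + (3 * L ^ 2 + 1) * ‖x (Fin.last n) - zs‖ ^ 2 + 3 * ‖e‖ ^ 2 ∧
      ‖x (Fin.last n) - zs‖ ^ 2
        ≤ 3 * (1 + ρb * L) ^ 2 * ‖z - zs‖ ^ 2 + 3 * ρb ^ 2 * ‖w (Fin.last n) - ws (Fin.last n)‖ ^ 2
          + 3 * ρb ^ 2 * ‖ε‖ ^ 2 := by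
  obtain ⟨hws, hwlast, hwsum⟩ := hps
  dsimp only at hws hwlast hwsum
  refine ⟨sps_gradient_sq_le hτ hB hwsum hwlast hyl fun i => ?_, ?_⟩
  · have hmono := hA i (hyres i) (hws i)
    rw [hyd i] at hmono ⊢
    exact resolvent_step_sq_le hτ hmono
  · rw [hxl, hwlast]
    exact forward_step_sq_le hB hρ hρb z zs (w (Fin.last n)) ε

section ConditionalExpectation

variable {Ω : Type*} {m m' m0 : MeasurableSpace Ω} {μ : Measure Ω} [IsFiniteMeasure μ]
  {F G H H' : Ω → ℝ}

lemma ae_condExp_le_add_mul (hm : m ≤ m0) (hF : AEStronglyMeasurable F μ) (hF0 : 0 ≤ᵐ[μ] F)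
    (hG : StronglyMeasurable[m] G) (hGi : Integrable G μ) (hH : Integrable H μ) {r : ℝ}
    (h : ∀ᵐ ω ∂μ, F ω ≤ G ω + r * H ω) : ∀ᵐ ω ∂μ, μ[F | m] ω ≤ G ω + r * μ[H | m] ω := by
  have hrH : Integrable (r • H) μ := hH.smul r
  have hFi := integrable_of_le_of_le hF hF0 h (integrable_zero _ _ _) (hGi.add hrH)
  filter_upwards [condExp_mono (m := m) hFi (hGi.add hrH) h, condExp_add hGi hrH m,
    condExp_smul r H m] with ω hmono hadd hsmul
  rwa [hadd, Pi.add_apply, hsmul, condExp_of_stronglyMeasurable hm hG hGi] at hmono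

lemma ae_condExp_le_add_mul_add_mul (hm : m ≤ m0) (hF : AEStronglyMeasurable F μ)
    (hF0 : 0 ≤ᵐ[μ] F) (hG : StronglyMeasurable[m] G) (hGi : Integrable G μ) (hH : Integrable H μ)
    (hH' : Integrable H' μ) {r r' : ℝ} (h : ∀ᵐ ω ∂μ, F ω ≤ G ω + r * H ω + r' * H' ω) :
    ∀ᵐ ω ∂μ, μ[F | m] ω ≤ G ω + r * μ[H | m] ω + r' * μ[H' | m] ω := by
  have hsum := ae_condExp_le_add_mul hm hF hF0 hG hGi ((hH.smul r).add (hH'.smul r')) (r := 1)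
    (by simpa only [one_mul, add_assoc, Pi.add_apply, Pi.smul_apply, smul_eq_mul] using h)
  filter_upwards [hsum, condExp_add (hH.smul r) (hH'.smul r') m, condExp_smul r H m,
    condExp_smul r' H' m] with ω hle hadd hsmul hsmul'
  rw [hadd, Pi.add_apply, hsmul, hsmul'] at hle
  simpa only [one_mul, add_assoc, Pi.smul_apply, smul_eq_mul] using hle

lemma ae_condExp_le_add_mul_of_condExp_le (hmm' : m ≤ m') (hm' : m' ≤ m0) (hF0 : 0 ≤ᵐ[μ] F)
    (hG : StronglyMeasurable[m] G) (hGi : Integrable G μ) (hH : Integrable H μ) {r : ℝ}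
    (h : ∀ᵐ ω ∂μ, μ[F | m'] ω ≤ G ω + r * H ω) :
    ∀ᵐ ω ∂μ, μ[F | m] ω ≤ G ω + r * μ[H | m] ω := by
  filter_upwards [ae_condExp_le_add_mul (hmm'.trans hm') integrable_condExp.aestronglyMeasurable
    (condExp_nonneg hF0) hG hGi hH h,
    condExp_condExp_of_le (f := F) hmm' hm'] with ω hle htower
  rwa [← htower]

end ConditionalExpectation

section Constants

variable {n : ℕ} {τ L N ρb : ℝ}

/- The coefficients of `‖z - z*‖²`, `∑_{i ≤ n} ‖wᵢ - wᵢ*‖²`, `‖w_{n+1} - w_{n+1}*‖²` and the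
constant term that the estimate produces; `3L² + 1 + 6NL²` is the total weight it puts on
`E[‖x_{n+1} - z*‖² | 𝔉_k]`. -/

lemma coeff_z_le_spsC1 (hn : 1 ≤ n) (hN : 0 ≤ N) :
    6 * n ^ 2 / τ ^ 2 + 2 * n + 3 * (3 * L ^ 2 + 1 + 6 * N * L ^ 2) * (1 + ρb * L) ^ 2
      + 6 * (3 * L ^ 2 + 1 + 6 * N * L ^ 2) * ρb ^ 2 * N * L ^ 2 ≤ spsC1 n τ L N ρb := by
  set K := 3 * L ^ 2 + 1 + 6 * N * L ^ 2
  set P := (L ^ 2 + 1) ^ 2 * (N + 1) ^ 2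
  have hn' : (1 : ℝ) ≤ n := by exact_mod_cast hn
  have hP : 0 ≤ P := by positivity
  have hKle : K ≤ 6 * ((L ^ 2 + 1) * (N + 1)) := by nlinarith
  have hτn : 6 * n ^ 2 / τ ^ 2 ≤ 8 * (n + 1) * (3 * (n + 1) ^ 2 / τ ^ 2) := by
    rw [← mul_div_assoc, ← mul_assoc]
    exact div_le_div_of_nonneg_right (by nlinarith) (by positivity)
  have hKρ : 3 * K * (1 + ρb * L) ^ 2 ≤ 36 * (1 + ρb ^ 2) * P := by
    have hρL : (1 + ρb * L) ^ 2 ≤ 2 * (1 + ρb ^ 2) * (L ^ 2 + 1) := by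
      nlinarith [sq_nonneg (1 - ρb * L), mul_nonneg (sq_nonneg ρb) (sq_nonneg L)]
    have hN1 : N + 1 ≤ (N + 1) ^ 2 := by nlinarith
    calc 3 * K * (1 + ρb * L) ^ 2
        ≤ 3 * (6 * ((L ^ 2 + 1) * (N + 1))) * (2 * (1 + ρb ^ 2) * (L ^ 2 + 1)) := by
          gcongr
      _ = 36 * (1 + ρb ^ 2) * (L ^ 2 + 1) ^ 2 * (N + 1) := by ring
      _ ≤ 36 * (1 + ρb ^ 2) * ((L ^ 2 + 1) ^ 2 * (N + 1) ^ 2) := by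
          rw [mul_assoc _ ((L ^ 2 + 1) ^ 2)]; gcongr
  have hKN : K * (N * L ^ 2) ≤ 6 * P :=
    calc K * (N * L ^ 2) ≤ 6 * ((L ^ 2 + 1) * (N + 1)) * ((N + 1) * (L ^ 2 + 1)) :=
          mul_le_mul hKle (by gcongr <;> linarith) (by positivity) (by positivity)
      _ = 6 * P := by ring
  have h36 : 36 * (1 + ρb ^ 2) * P + 6 * ρb ^ 2 * (6 * P)
      ≤ 24 * (1 + 10 * ρb ^ 2) * (n + 1) * P := by
    nlinarith [mul_nonneg (mul_nonneg (sq_nonneg ρb) hP) (by linarith : (0 : ℝ) ≤ n - 1)]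
  have hrest : 0 ≤ 8 * ((n : ℝ) + 1) * (2 * τ ^ 2 + 6 * (n + 1)) := by positivity
  have hKN' := mul_le_mul_of_nonneg_left hKN (by positivity : (0 : ℝ) ≤ 6 * ρb ^ 2)
  unfold spsC1
  linear_combination hτn + hKρ + hKN' + h36 + hrest + 6 * hn'

lemma coeff_w_le_spsC1 (hn : 1 ≤ n) :
    6 * n + 2 * τ ^ 2 ≤ spsC1 n τ L N ρb := by
  have hn' : (1 : ℝ) ≤ n := by exact_mod_cast hn
  have h : 6 * n + 2 * τ ^ 2 ≤ 8 * ((n : ℝ) + 1) * (2 * τ ^ 2 + 6 * (n + 1)) := by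
    nlinarith [sq_nonneg τ]
  unfold spsC1
  have : 0 ≤ 24 * (1 + 10 * ρb ^ 2) * ((n : ℝ) + 1) * (L ^ 2 + 1) ^ 2 * (N + 1) ^ 2 := by
    positivity
  have : 0 ≤ 8 * ((n : ℝ) + 1) * (1 + 3 * (n + 1) ^ 2 / τ ^ 2) := by positivity
  linarith

lemma coeff_wlast_le_spsC1 (hn : 1 ≤ n) (hN : 0 ≤ N) :
    3 * (3 * L ^ 2 + 1 + 6 * N * L ^ 2) * ρb ^ 2 ≤ spsC1 n τ L N ρb := by
  have hn' : (1 : ℝ) ≤ n := by exact_mod_cast hn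
  have hx : 1 ≤ (L ^ 2 + 1) * (N + 1) := one_le_mul_of_one_le_of_one_le (by nlinarith) (by linarith)
  have hK : 3 * (3 * L ^ 2 + 1 + 6 * N * L ^ 2) ≤ 240 * (((L ^ 2 + 1) * (N + 1)) ^ 2) := by
    nlinarith
  have hK' := mul_le_mul_of_nonneg_left hK (sq_nonneg ρb)
  have hrest : 0 ≤ 24 * ((n : ℝ) + 1) * (L ^ 2 + 1) ^ 2 * (N + 1) ^ 2
      + 8 * ((n : ℝ) + 1) * (2 * τ ^ 2 + 6 * (n + 1) + 1 + 3 * (n + 1) ^ 2 / τ ^ 2) := by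
    positivity
  have hP : 0 ≤ ρb ^ 2 * ((L ^ 2 + 1) * (N + 1)) ^ 2 * (n - 1) :=
    mul_nonneg (by positivity) (by linarith)
  unfold spsC1
  nlinarith

lemma coeff_const_le_spsC2 {d : ℕ} (hN : 0 ≤ N) (Bzs sw : Ed d) :
    3 * N + 3 * (3 * L ^ 2 + 1 + 6 * N * L ^ 2) * ρb ^ 2 * N
      + (6 * N + 6 * (3 * L ^ 2 + 1 + 6 * N * L ^ 2) * ρb ^ 2 * N) * ‖Bzs‖ ^ 2
      ≤ spsC2 n L N ρb Bzs sw := by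
  have hρN := mul_nonneg (sq_nonneg ρb) hN
  have hρNL := mul_nonneg hρN (sq_nonneg L)
  have hρNNL := mul_nonneg hρNL hN
  have hρNn := mul_nonneg hρN (Nat.cast_nonneg n : (0 : ℝ) ≤ n)
  have hconst : 3 * N + 3 * (3 * L ^ 2 + 1 + 6 * N * L ^ 2) * ρb ^ 2 * N
      ≤ 12 * ρb ^ 2 * N * (2 * L ^ 2 * (N + 1) + n + 1) + 4 * N := by
    nlinarith
  have hβ : 6 * N + 6 * (3 * L ^ 2 + 1 + 6 * N * L ^ 2) * ρb ^ 2 * N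
      ≤ 16 * (N + 1) * (1 + 4 * ρb ^ 2 * (n + 1) + 9 * ρb ^ 2 * L ^ 2 * (N + 1)) := by
    nlinarith [mul_nonneg (sq_nonneg ρb) (sq_nonneg L), sq_nonneg ρb]
  unfold spsC2
  nlinarith [mul_le_mul_of_nonneg_right hβ (sq_nonneg ‖Bzs‖), sq_nonneg ‖sw‖]

end Constants

/-- At a sample point, `cF`, `cX`, `cε`, `ce` are the conditional expectations of the quantity,
`‖x_{n+1} - z*‖²`, `‖ε‖²` and `‖e‖²`; `bz = ‖B z‖²`, and `a`, `S`, `W` are `‖z - z*‖²`,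
`∑_{i ≤ n} ‖wᵢ - wᵢ*‖²` and `‖w_{n+1} - w_{n+1}*‖²`. -/
lemma le_spsC1_mul_add_spsC2_of_chain {d n : ℕ} (hn : 1 ≤ n) {τ L N ρb : ℝ} (hN : 0 ≤ N)
    (Bzs sw : Ed d) {a S W bz cF cX cε ce : ℝ}
    (ha : 0 ≤ a) (hS : 0 ≤ S) (hW : 0 ≤ W)
    (hF : cF ≤ (6 * n ^ 2 / τ ^ 2 + 2 * n) * a + (6 * n + 2 * τ ^ 2) * S
      + (3 * L ^ 2 + 1) * cX + 3 * ce)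
    (he : ce ≤ N + 2 * N * ‖Bzs‖ ^ 2 + 2 * N * L ^ 2 * cX)
    (hX : cX ≤ 3 * (1 + ρb * L) ^ 2 * a + 3 * ρb ^ 2 * W + 3 * ρb ^ 2 * cε)
    (hε : cε ≤ N + N * bz) (hbz : bz ≤ 2 * ‖Bzs‖ ^ 2 + 2 * L ^ 2 * a) :
    cF ≤ spsC1 n τ L N ρb * (a + S + W) + spsC2 n L N ρb Bzs sw := by
  set β := ‖Bzs‖ ^ 2
  set K := 3 * L ^ 2 + 1 + 6 * N * L ^ 2
  have hK : 0 ≤ K := by positivity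
  have hcε : cε ≤ N + 2 * N * β + 2 * N * L ^ 2 * a := by
    linear_combination hε + mul_le_mul_of_nonneg_left hbz hN
  have hcX : cX ≤ 3 * (1 + ρb * L) ^ 2 * a + 3 * ρb ^ 2 * (N + 2 * N * β + 2 * N * L ^ 2 * a)
      + 3 * ρb ^ 2 * W := by
    linear_combination hX + 3 * mul_le_mul_of_nonneg_left hcε (sq_nonneg ρb)
  have hcF : cF ≤ (6 * n ^ 2 / τ ^ 2 + 2 * n) * a + (6 * n + 2 * τ ^ 2) * S + K * cX
      + 3 * N + 6 * N * β := by
    linear_combination hF + 3 * he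
  linear_combination hcF + mul_le_mul_of_nonneg_left hcX hK
    + mul_le_mul_of_nonneg_right (coeff_z_le_spsC1 hn hN (τ := τ) (L := L) (ρb := ρb)) ha
    + mul_le_mul_of_nonneg_right (coeff_w_le_spsC1 hn (τ := τ) (L := L) (N := N) (ρb := ρb)) hS
    + mul_le_mul_of_nonneg_right (coeff_wlast_le_spsC1 hn hN (τ := τ) (L := L) (ρb := ρb)) hW
    + coeff_const_le_spsC2 hN (L := L) (ρb := ρb) Bzs sw

section Filtration

variable {d n : ℕ} {Ω : Type} [mΩ : MeasurableSpace Ω] {z : ℕ → Ω → Ed d}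
  {w : ℕ → Fin (n + 1) → Ω → Ed d}

lemma spsSigma_le (hzm : ∀ k, Measurable (z k)) (hwm : ∀ k i, Measurable (w k i)) (k : ℕ) :
    spsSigma z w k ≤ mΩ :=
  iSup₂_le fun j _ => ((hzm j).prodMk (measurable_pi_lambda _ (hwm j))).comap_le

lemma measurable_spsSigma_iterate {k : ℕ} (hk : 1 ≤ k) :
    Measurable[spsSigma z w k] (z k) ∧ ∀ i, Measurable[spsSigma z w k] (w k i) := by
  have hp : Measurable[spsSigma z w k] fun ω => (z k ω, fun i => w k i ω) :=
    Measurable.of_comap_le <| le_iSup₂ (f := fun j (_ : j ∈ Set.Icc 1 k) =>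
      MeasurableSpace.comap (fun ω => (z j ω, fun i => w j i ω)) inferInstance) k ⟨hk, le_rfl⟩
  exact ⟨measurable_fst.comp hp, fun i => (measurable_pi_apply i).comp (measurable_snd.comp hp)⟩

end Filtration

lemma MeasureTheory.MemLp.integrable_norm_sub_sq {Ω E : Type*} [MeasurableSpace Ω]
    {μ : Measure Ω} [IsFiniteMeasure μ] [NormedAddCommGroup E] {f : Ω → E} (hf : MemLp f 2 μ)
    (c : E) : Integrable (fun ω => ‖f ω - c‖ ^ 2) μ :=
  (hf.sub (memLp_const c)).norm.integrable_sq

theorem sps_gradient_bound_general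
    {d n : ℕ} (hn : 1 ≤ n)
    (τ : ℝ) (hτ : 0 < τ)
    (ρ : ℕ → ℝ) (hρ : ∀ k, 1 ≤ k → 0 < ρ k)
    (A : Fin n → Ed d → Set (Ed d)) (hA : ∀ i, IsMaximalMonotoneOp (A i))
    (B : Ed d → Ed d) (L : ℝ) (hL : 0 < L)
    (hBlip : ∀ u v : Ed d, ‖B u - B v‖ ≤ L * ‖u - v‖)
    {Ω : Type} [MeasurableSpace Ω] (P : Measure Ω) [IsProbabilityMeasure P]
    (z : ℕ → Ω → Ed d) (w x y : ℕ → Fin (n + 1) → Ω → Ed d) (ε e : ℕ → Ω → Ed d)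
    (hzm : ∀ k, Measurable (z k)) (hwm : ∀ k i, Measurable (w k i))
    (hxm : ∀ k i, Measurable (x k i)) (hym : ∀ k i, Measurable (y k i))
    (hεm : ∀ k, Measurable (ε k))
    (hyd : ∀ k, 1 ≤ k → ∀ (i : Fin n) (ω : Ω),
      y k i.castSucc ω = τ⁻¹ • (z k ω + τ • w k i.castSucc ω - x k i.castSucc ω))
    (hyres : ∀ k, 1 ≤ k → ∀ (i : Fin n) (ω : Ω), y k i.castSucc ω ∈ A i (x k i.castSucc ω))
    (hxl : ∀ k, 1 ≤ k → ∀ ω : Ω,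
      x k (Fin.last n) ω = z k ω - ρ k • (B (z k ω) + ε k ω - w k (Fin.last n) ω))
    (hyl : ∀ k, 1 ≤ k → ∀ ω : Ω, y k (Fin.last n) ω = B (x k (Fin.last n) ω) + e k ω)
    (N : ℝ) (hN : 0 ≤ N)
    (hεL2 : ∀ k, 1 ≤ k → MemLp (ε k) 2 P) (heL2 : ∀ k, 1 ≤ k → MemLp (e k) 2 P)
    (hzL2 : ∀ k, 1 ≤ k → MemLp (z k) 2 P) (hwL2 : ∀ k, 1 ≤ k → ∀ i, MemLp (w k i) 2 P)
    (hεv : ∀ k, 1 ≤ k → ∀ᵐ ω ∂P,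
      (P[fun ω' => ‖ε k ω'‖ ^ 2 | spsSigma z w k]) ω ≤ N + N * ‖B (z k ω)‖ ^ 2)
    (hev : ∀ k, 1 ≤ k → ∀ᵐ ω ∂P,
      (P[fun ω' => ‖e k ω'‖ ^ 2 |
          spsSigma z w k ⊔ MeasurableSpace.comap (ε k) inferInstance]) ω
        ≤ N + N * ‖B (x k (Fin.last n) ω)‖ ^ 2)
    (ρb : ℝ) (hρb : ∀ k, 1 ≤ k → ρ k ≤ ρb) :
    ∀ ps ∈ extSolSet A B, ∀ k, 1 ≤ k → ∀ᵐ ω ∂P,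
      (P[fun ω' => ‖∑ i, y k i ω'‖ ^ 2
            + ∑ i : Fin (n + 1), ‖x k i ω' - ((n : ℝ) + 1)⁻¹ • ∑ j, x k j ω'‖ ^ 2 |
          spsSigma z w k]) ω
        ≤ spsC1 n τ L N ρb * pDistSq (z k ω) (fun i => w k i ω) ps
          + spsC2 n L N ρb (B ps.1) (∑ i : Fin n, ps.2 i.castSucc) := by
  rintro ⟨zs, ws⟩ hps k hk
  dsimp only
  have hm := spsSigma_le hzm hwm k
  obtain ⟨hzk, hwk⟩ := measurable_spsSigma_iterate (z := z) (w := w) hk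
  have hBc : Continuous B := ((lipschitzWith_iff_norm_sub_le (C := ⟨L, hL.le⟩)).2 hBlip).continuous
  have hstep ω := sps_step_sq_le hτ (fun i => (hA i).1) hBlip (hρ k hk).le (hρb k hk) hps
    (w := fun i => w k i ω) (x := fun i => x k i ω) (y := fun i => y k i ω)
    (hyd k hk · ω) (hyres k hk · ω) (hxl k hk ω) (hyl k hk ω)
  have ha := (hzL2 k hk).integrable_norm_sub_sq zs
  have hw i := (hwL2 k hk i).integrable_norm_sub_sq (ws i)
  have hεi := (hεL2 k hk).norm.integrable_sq
  have hei := (heL2 k hk).norm.integrable_sq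
  have hXi : Integrable (fun ω => ‖x k (Fin.last n) ω - zs‖ ^ 2) P :=
    integrable_of_le_of_le (by fun_prop) (ae_of_all _ fun _ => sq_nonneg _)
      (ae_of_all _ fun ω => (hstep ω).2) (integrable_zero _ _ _)
      (((ha.const_mul _).add ((hw _).const_mul _)).add (hεi.const_mul _))
  have hcF := ae_condExp_le_add_mul_add_mul hm (by fun_prop) (ae_of_all _ fun _ => by positivity)
    (by fun_prop) (by fun_prop) hXi hei (ae_of_all _ fun ω => (hstep ω).1)
  have hcX := ae_condExp_le_add_mul hm (by fun_prop) (ae_of_all _ fun _ => sq_nonneg _)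
    (by fun_prop) (by fun_prop) hεi (ae_of_all _ fun ω => (hstep ω).2)
  have hce := ae_condExp_le_add_mul_of_condExp_le (F := fun ω => ‖e k ω‖ ^ 2)
    (G := fun _ => N + 2 * N * ‖B zs‖ ^ 2) (r := 2 * N * L ^ 2) le_sup_left
    (sup_le hm (hεm k).comap_le) (ae_of_all _ fun _ => sq_nonneg _) stronglyMeasurable_const
    (integrable_const _) hXi <| (hev k hk).mono fun ω h => by
      nlinarith [mul_le_mul_of_nonneg_left
        (norm_sq_le_of_lipschitz hBlip (x k (Fin.last n) ω) zs) hN]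
  filter_upwards [hcF, hce, hcX, hεv k hk] with ω hF he hX hε
  rw [pDistSq, Fin.sum_univ_castSucc, ← add_assoc]
  exact le_spsC1_mul_add_spsC2_of_chain hn hN (B zs) _ (sq_nonneg _)
    (Finset.sum_nonneg fun _ _ => sq_nonneg _) (sq_nonneg _) hF he hX hε
    (norm_sq_le_of_lipschitz hBlip _ _)

/-- conditional bound on the squared norm of the hyperplane gradient. -/
theorem sps_gradient_bound
    {d n : ℕ} (hd : 1 ≤ d) (hn : 1 ≤ n)
    (τ : ℝ) (hτ : 0 < τ)
    (α ρ : ℕ → ℝ) (hα : ∀ k, 1 ≤ k → 0 < α k) (hρ : ∀ k, 1 ≤ k → 0 < ρ k)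
    (A : Fin n → Ed d → Set (Ed d)) (hA : ∀ i, IsMaximalMonotoneOp (A i))
    (B : Ed d → Ed d) (L : ℝ) (hL : 0 < L)
    (hBmono : ∀ u v : Ed d, 0 ≤ ⟪B u - B v, u - v⟫)
    (hBlip : ∀ u v : Ed d, ‖B u - B v‖ ≤ L * ‖u - v‖)
    (hS : (extSolSet A B).Nonempty)
    {Ω : Type} [MeasurableSpace Ω] (P : Measure Ω) [IsProbabilityMeasure P]
    (z : ℕ → Ω → Ed d) (w x y : ℕ → Fin (n + 1) → Ω → Ed d) (ε e : ℕ → Ω → Ed d)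
    (hzm : ∀ k, Measurable (z k)) (hwm : ∀ k i, Measurable (w k i))
    (hxm : ∀ k i, Measurable (x k i)) (hym : ∀ k i, Measurable (y k i))
    (hεm : ∀ k, Measurable (ε k)) (hem : ∀ k, Measurable (e k))
    (hw1 : ∀ ω, ∑ i, w 1 i ω = 0)
    (hyd : ∀ k, 1 ≤ k → ∀ (i : Fin n) (ω : Ω),
      y k i.castSucc ω = τ⁻¹ • (z k ω + τ • w k i.castSucc ω - x k i.castSucc ω))
    (hyres : ∀ k, 1 ≤ k → ∀ (i : Fin n) (ω : Ω), y k i.castSucc ω ∈ A i (x k i.castSucc ω))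
    (hxl : ∀ k, 1 ≤ k → ∀ ω : Ω,
      x k (Fin.last n) ω = z k ω - ρ k • (B (z k ω) + ε k ω - w k (Fin.last n) ω))
    (hyl : ∀ k, 1 ≤ k → ∀ ω : Ω, y k (Fin.last n) ω = B (x k (Fin.last n) ω) + e k ω)
    (hzu : ∀ k, 1 ≤ k → ∀ ω : Ω, z (k + 1) ω = z k ω - α k • ∑ i, y k i ω)
    (hwu : ∀ k, 1 ≤ k → ∀ (i : Fin (n + 1)) (ω : Ω),
      w (k + 1) i ω = w k i ω - α k • (x k i ω - ((n : ℝ) + 1)⁻¹ • ∑ j, x k j ω))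
    (N : ℝ) (hN : 0 ≤ N)
    (hεL2 : ∀ k, 1 ≤ k → MemLp (ε k) 2 P) (heL2 : ∀ k, 1 ≤ k → MemLp (e k) 2 P)
    (hzL2 : ∀ k, 1 ≤ k → MemLp (z k) 2 P) (hwL2 : ∀ k, 1 ≤ k → ∀ i, MemLp (w k i) 2 P)
    (hε0 : ∀ k, 1 ≤ k → ∀ᵐ ω ∂P, (P[ε k | spsSigma z w k]) ω = 0)
    (he0 : ∀ k, 1 ≤ k → ∀ᵐ ω ∂P, (P[e k | spsSigma z w k]) ω = 0)
    (hεv : ∀ k, 1 ≤ k → ∀ᵐ ω ∂P,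
      (P[fun ω' => ‖ε k ω'‖ ^ 2 | spsSigma z w k]) ω ≤ N + N * ‖B (z k ω)‖ ^ 2)
    (hev : ∀ k, 1 ≤ k → ∀ᵐ ω ∂P,
      (P[fun ω' => ‖e k ω'‖ ^ 2 |
          spsSigma z w k ⊔ MeasurableSpace.comap (ε k) inferInstance]) ω
        ≤ N + N * ‖B (x k (Fin.last n) ω)‖ ^ 2)
    (ρb : ℝ) (hρb : ∀ k, 1 ≤ k → ρ k ≤ ρb) :
    ∀ ps ∈ extSolSet A B, ∀ k, 1 ≤ k → ∀ᵐ ω ∂P,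
      (P[fun ω' => ‖∑ i, y k i ω'‖ ^ 2
            + ∑ i : Fin (n + 1), ‖x k i ω' - ((n : ℝ) + 1)⁻¹ • ∑ j, x k j ω'‖ ^ 2 |
          spsSigma z w k]) ω
        ≤ spsC1 n τ L N ρb * pDistSq (z k ω) (fun i => w k i ω) ps
          + spsC2 n L N ρb (B ps.1) (∑ i : Fin n, ps.2 i.castSucc) :=
  sps_gradient_bound_general hn τ hτ ρ hρ A hA B L hL hBlip P z w x y ε e hzm hwm hxm hym hεm hyd
    hyres hxl hyl N hN hεL2 heL2 hzL2 hwL2 hεv hev ρb hρb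
end
end

section
/- Let A_1, …, A_n be maximal monotone set-valued operators on ℝ^d and let B : ℝ^d → ℝ^d be monotone and Lipschitz continuous. Then the extended solution set S is a closed convex subset of ℝ^{(n+2)d}. -/
open scoped RealInnerProductSpace BigOperators NNReal

noncomputable section

lemma mem_of_forall_inner {d : ℕ} {A : Ed d → Set (Ed d)} (hA : IsMaximalMonotoneOp A)
    {z w : Ed d} (h : ∀ ⦃x y : Ed d⦄, y ∈ A x → 0 ≤ ⟪w - y, z - x⟫) : w ∈ A z := by
  set A' : Ed d → Set (Ed d) := fun u => A u ∪ {v | u = z ∧ v = w} with hA'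
  have hmono : IsMonotoneOp A' := by
    rintro x y u v hu hv
    rcases hu with hu | ⟨hx, hu⟩ <;> rcases hv with hv | ⟨hy, hv⟩
    · exact hA.1 hu hv
    · rw [hy, hv]
      have e : ⟪u - w, x - z⟫ = ⟪w - u, z - x⟫ := by
        rw [← neg_sub w u, ← neg_sub z x, inner_neg_neg]
      rw [e]; exact h hu
    · rw [hx, hu]; exact h hv
    · rw [hx, hu, hy, hv]; simp
  have heq := hA.2 A' hmono (fun u => Set.subset_union_left)
  rw [← heq]
  exact Or.inr ⟨rfl, rfl⟩

lemma eq_B_of_forall_inner {d : ℕ} {B : Ed d → Ed d}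
    {K : ℝ≥0} (hK : LipschitzWith K B) {z w : Ed d}
    (h : ∀ x : Ed d, 0 ≤ ⟪w - B x, z - x⟫) : w = B z := by
  have key : ∀ v : Ed d, 0 ≤ ⟪w - B z, v⟫ := by
    intro v
    have step : ∀ t : ℝ, 0 < t → -(K * ‖v‖ ^ 2) * t ≤ ⟪w - B z, v⟫ := by
      intro t ht
      have h1 := h (z - t • v)
      have hz : z - (z - t • v) = t • v := by abel
      rw [hz, real_inner_smul_right] at h1
      have h2 : 0 ≤ ⟪w - B (z - t • v), v⟫ := nonneg_of_mul_nonneg_right h1 ht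
      have h3 : ⟪w - B z, v⟫ = ⟪w - B (z - t • v), v⟫ + ⟪B (z - t • v) - B z, v⟫ := by
        rw [← inner_add_left]; congr 1; abel
      have h4 : ‖B (z - t • v) - B z‖ ≤ K * (t * ‖v‖) := by
        have := hK.dist_le_mul (z - t • v) z
        rw [dist_eq_norm] at this
        have hh : z - t • v - z = -(t • v) := by abel
        calc ‖B (z - t • v) - B z‖ ≤ K * ‖z - t • v - z‖ := by
              simpa [dist_eq_norm] using this
          _ = K * (t * ‖v‖) := by rw [hh, norm_neg, norm_smul]; simp [abs_of_pos ht]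
      have h5 : -(K * (t * ‖v‖) * ‖v‖) ≤ ⟪B (z - t • v) - B z, v⟫ := by
        have hcs := abs_real_inner_le_norm (B (z - t • v) - B z) v
        have := neg_abs_le ⟪B (z - t • v) - B z, v⟫
        nlinarith [norm_nonneg v, mul_le_mul_of_nonneg_right h4 (norm_nonneg v)]
      rw [h3]
      nlinarith
    by_contra hneg
    push_neg at hneg
    set c : ℝ := ⟪w - B z, v⟫ with hc
    have hKv : (0:ℝ) < K * ‖v‖ ^ 2 + 1 := by positivity
    have ht : (0:ℝ) < -c / (K * ‖v‖ ^ 2 + 1) := by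
      apply div_pos (by linarith) hKv
    have := step _ ht
    have h6 : -(K * ‖v‖ ^ 2) * (-c / (K * ‖v‖ ^ 2 + 1)) = (K * ‖v‖ ^ 2) * c / (K * ‖v‖ ^ 2 + 1) := by
      field_simp
    rw [h6] at this
    rw [div_le_iff₀ hKv] at this
    nlinarith [mul_nonneg (mul_nonneg K.coe_nonneg (sq_nonneg ‖v‖)) (le_of_lt (neg_pos.mpr hneg))]
  have h7 := key (B z - w)
  have h8 : ⟪w - B z, B z - w⟫ = -‖w - B z‖ ^ 2 := by
    rw [← neg_sub w (B z), inner_neg_right, real_inner_self_eq_norm_sq]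
  rw [h8] at h7
  have : ‖w - B z‖ ^ 2 = 0 := le_antisymm (by linarith) (sq_nonneg _)
  have := sub_eq_zero.mp (by simpa using pow_eq_zero_iff (n := 2) (by norm_num) |>.mp this)
  exact this

lemma combo_inner {d : ℕ} (a b : ℝ) (hab : a + b = 1) (w w' y z z' x : Ed d) :
    ⟪(a • w + b • w') - y, (a • z + b • z') - x⟫ =
      a * ⟪w - y, z - x⟫ + b * ⟪w' - y, z' - x⟫ - a * b * ⟪w - w', z - z'⟫ := by
  have hb : b = 1 - a := by linarith
  subst hb
  simp only [inner_sub_left, inner_sub_right, inner_add_left, inner_add_right,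
    real_inner_smul_left, real_inner_smul_right]
  ring

/-- the extended solution set is closed and convex. -/
theorem extSolSet_isClosed_convex {d n : ℕ}
    (A : Fin n → Ed d → Set (Ed d)) (hA : ∀ i, IsMaximalMonotoneOp (A i))
    (B : Ed d → Ed d) (hBmono : ∀ u v : Ed d, 0 ≤ ⟪B u - B v, u - v⟫)
    (hBlip : ∃ K : ℝ≥0, LipschitzWith K B) :
    IsClosed (extSolSet A B) ∧ Convex ℝ (extSolSet A B) := by
  obtain ⟨K, hK⟩ := hBlip
  constructor
  · -- closedness
    have hset : extSolSet A B =
        ({p : Ed d × (Fin (n + 1) → Ed d) |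
            ∀ j : Fin n, ∀ x y : Ed d, y ∈ A j x → 0 ≤ ⟪p.2 j.castSucc - y, p.1 - x⟫} ∩
          {p | p.2 (Fin.last n) = B p.1} ∩ {p | ∑ i, p.2 i = 0}) := by
      ext p
      simp only [extSolSet, Set.mem_setOf_eq, Set.mem_inter_iff]
      constructor
      · rintro ⟨h1, h2, h3⟩
        exact ⟨⟨fun j x y hy => (hA j).1 (h1 j) hy, h2⟩, h3⟩
      · rintro ⟨⟨h1, h2⟩, h3⟩
        exact ⟨fun j => mem_of_forall_inner (hA j) (fun x y hy => h1 j x y hy), h2, h3⟩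
    rw [hset]
    refine (IsClosed.inter ?_ ?_).inter ?_
    · have : {p : Ed d × (Fin (n + 1) → Ed d) |
          ∀ j : Fin n, ∀ x y : Ed d, y ∈ A j x → 0 ≤ ⟪p.2 j.castSucc - y, p.1 - x⟫} =
          ⋂ j : Fin n, ⋂ x : Ed d, ⋂ y : Ed d, ⋂ (_ : y ∈ A j x),
            {p : Ed d × (Fin (n + 1) → Ed d) | 0 ≤ ⟪p.2 j.castSucc - y, p.1 - x⟫} := by
        ext p; simp [Set.mem_iInter]
      rw [this]
      refine isClosed_iInter fun j => isClosed_iInter fun x => isClosed_iInter fun y =>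
        isClosed_iInter fun _ => isClosed_le continuous_const ?_
      exact Continuous.inner
        (((continuous_apply _).comp continuous_snd).sub continuous_const)
        (continuous_fst.sub continuous_const)
    · exact isClosed_eq ((continuous_apply _).comp continuous_snd)
        (hK.continuous.comp continuous_fst)
    · exact isClosed_eq (continuous_finset_sum _ fun i _ =>
        (continuous_apply i).comp continuous_snd) continuous_const
  · -- convexity
    rintro p hp q hq a b ha hb hab
    obtain ⟨hp1, hp2, hp3⟩ := hp
    obtain ⟨hq1, hq2, hq3⟩ := hq
    set f : Fin (n + 1) → ℝ := fun i => ⟪p.2 i - q.2 i, p.1 - q.1⟫ with hf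
    have hnn : ∀ i ∈ Finset.univ, 0 ≤ f i := by
      intro i _
      induction i using Fin.lastCases with
      | last => simp only [hf]; rw [hp2, hq2]; exact hBmono p.1 q.1
      | cast j => exact (hA j).1 (hp1 j) (hq1 j)
    have hsum : ∑ i, f i = 0 := by
      simp only [hf]
      rw [← sum_inner, Finset.sum_sub_distrib, hp3, hq3, sub_zero, inner_zero_left]
    have hzero : ∀ i : Fin (n + 1), f i = 0 := by
      intro i
      exact (Finset.sum_eq_zero_iff_of_nonneg hnn).mp hsum i (Finset.mem_univ i)
    refine ⟨?_, ?_, ?_⟩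
    · intro j
      refine mem_of_forall_inner (hA j) fun x y hy => ?_
      show 0 ≤ ⟪(a • p.2 j.castSucc + b • q.2 j.castSucc) - y, (a • p.1 + b • q.1) - x⟫
      rw [combo_inner a b hab]
      have h1 := (hA j).1 (hp1 j) hy
      have h2 := (hA j).1 (hq1 j) hy
      have h3 := hzero j.castSucc
      simp only [hf] at h3
      rw [h3, mul_zero, sub_zero]
      exact add_nonneg (mul_nonneg ha h1) (mul_nonneg hb h2)
    · show a • p.2 (Fin.last n) + b • q.2 (Fin.last n) = B (a • p.1 + b • q.1)
      refine eq_B_of_forall_inner hK fun x => ?_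
      rw [combo_inner a b hab]
      have h1 : 0 ≤ ⟪p.2 (Fin.last n) - B x, p.1 - x⟫ := by rw [hp2]; exact hBmono p.1 x
      have h2 : 0 ≤ ⟪q.2 (Fin.last n) - B x, q.1 - x⟫ := by rw [hq2]; exact hBmono q.1 x
      have h3 := hzero (Fin.last n)
      simp only [hf] at h3
      rw [h3, mul_zero, sub_zero]
      exact add_nonneg (mul_nonneg ha h1) (mul_nonneg hb h2)
    · show ∑ i, (a • p.2 i + b • q.2 i) = 0
      rw [Finset.sum_add_distrib, ← Finset.smul_sum, ← Finset.smul_sum, hp3, hq3,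
        smul_zero, smul_zero, add_zero]
end
end

section
/- Let n ≥ 1, let B : ℝ^d → ℝ^d, and let z, w_1, …, w_{n+1}, x_1, …, x_n, y_1, …, y_n ∈ ℝ^d satisfy Σ_{i=1}^{n+1} w_i = 0. Then Σ_{i=1}^n ‖z − x_i‖² + ‖B(z) + Σ_{i=1}^n y_i‖² ≤ 2n ( Σ_{i=1}^n ‖y_i − w_i‖² + Σ_{i=1}^n ‖z − x_i‖² + ‖B(z) − w_{n+1}‖² ). -/
open scoped RealInnerProductSpace BigOperators NNReal

noncomputable section

/-- the residual `R` is bounded by `2n` times the residual `O`. -/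
theorem residual_R_le_two_n_mul_O {d n : ℕ} (hn : 1 ≤ n) (B : Ed d → Ed d)
    (z : Ed d) (w : Fin (n + 1) → Ed d) (x y : Fin n → Ed d)
    (hw : ∑ i, w i = 0) :
    (∑ i, ‖z - x i‖ ^ 2) + ‖B z + ∑ i, y i‖ ^ 2 ≤
      2 * (n : ℝ) * ((∑ i, ‖y i - w i.castSucc‖ ^ 2) + (∑ i, ‖z - x i‖ ^ 2)
        + ‖B z - w (Fin.last n)‖ ^ 2) := by
  set v : Fin (n + 1) → Ed d :=
    Fin.snoc (fun i => y i - w i.castSucc) (B z - w (Fin.last n)) with hv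
  have hsum : ∑ i, v i = B z + ∑ i, y i := by
    rw [Fin.sum_univ_castSucc]
    have h1 : ∀ i : Fin n, v i.castSucc = y i - w i.castSucc := fun i => by
      simp [hv]
    have h2 : v (Fin.last n) = B z - w (Fin.last n) := by simp [hv]
    simp only [h1, h2, Finset.sum_sub_distrib]
    have hw' : ∑ i : Fin n, w i.castSucc + w (Fin.last n) = 0 := by
      rw [← Fin.sum_univ_castSucc]; exact hw
    have : ∑ i : Fin n, w i.castSucc = -w (Fin.last n) := eq_neg_of_add_eq_zero_left hw'
    rw [this]; abel
  have key : ‖B z + ∑ i, y i‖ ^ 2 ≤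
      ((n : ℝ) + 1) * ((∑ i, ‖y i - w i.castSucc‖ ^ 2) + ‖B z - w (Fin.last n)‖ ^ 2) := by
    rw [← hsum]
    have h1 : ‖∑ i, v i‖ ≤ ∑ i, ‖v i‖ := norm_sum_le _ _
    have h2 : ‖∑ i, v i‖ ^ 2 ≤ (∑ i, ‖v i‖) ^ 2 := by
      apply pow_le_pow_left₀ (norm_nonneg _) h1
    have h3 : (∑ i, ‖v i‖) ^ 2 ≤ (Finset.univ : Finset (Fin (n+1))).card * ∑ i, ‖v i‖ ^ 2 :=
      sq_sum_le_card_mul_sum_sq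
    have h4 : ∑ i, ‖v i‖ ^ 2 =
        (∑ i, ‖y i - w i.castSucc‖ ^ 2) + ‖B z - w (Fin.last n)‖ ^ 2 := by
      rw [Fin.sum_univ_castSucc]
      simp [hv]
    rw [h4] at h3
    simp only [Finset.card_univ, Fintype.card_fin] at h3
    push_cast at h3
    linarith
  have hA : (0:ℝ) ≤ ∑ i, ‖y i - w i.castSucc‖ ^ 2 :=
    Finset.sum_nonneg fun i _ => sq_nonneg _
  have hB : (0:ℝ) ≤ ∑ i, ‖z - x i‖ ^ 2 := Finset.sum_nonneg fun i _ => sq_nonneg _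
  have hC : (0:ℝ) ≤ ‖B z - w (Fin.last n)‖ ^ 2 := sq_nonneg _
  have hn' : (1:ℝ) ≤ (n:ℝ) := by exact_mod_cast hn
  nlinarith [key]
end
end

section
/- Let A_1, …, A_n be set-valued operators on ℝ^d and B : ℝ^d → ℝ^d. Define the set-valued operator 𝒯 on ℝ^{(n+1)d} by 𝒯(w_1, …, w_n, z) = (A_1^{-1}(w_1) × ⋯ × A_n^{-1}(w_n) × {B(z)}) + M(w_1, …, w_n, z), where A_i^{-1}(w) = {x ∈ ℝ^d : w ∈ A_i(x)} and M is the linear map M(w_1, …, w_n, z) = (−z, −z, …, −z, Σ_{i=1}^n w_i). Then a point z* ∈ ℝ^d satisfies 0 ∈ Σ_{i=1}^n A_i(z*) + B(z*) (Minkowski sum) if and only if там exist w_1, …, w_n ∈ ℝ^d with 0 ∈ 𝒯(w_1, …, w_n, z*). -/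
open scoped RealInnerProductSpace BigOperators NNReal

noncomputable section

/-- The product-space operator `𝒯(w₁,…,wₙ,z) = (A₁⁻¹(w₁) × ⋯ × Aₙ⁻¹(wₙ) × {B(z)}) + M(w₁,…,wₙ,z)`
with `M(w₁,…,wₙ,z) = (-z,…,-z, ∑ᵢ wᵢ)`. -/
def prodSpaceOp {d n : ℕ} (A : Fin n → Ed d → Set (Ed d)) (B : Ed d → Ed d)
    (q : (Fin n → Ed d) × Ed d) : Set ((Fin n → Ed d) × Ed d) :=
  {v | ∃ x : Fin n → Ed d, (∀ i, q.1 i ∈ A i (x i)) ∧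
    v.1 = (fun i => x i - q.2) ∧ v.2 = B q.2 + ∑ i, q.1 i}

/-- `z*` solves `0 ∈ ∑ᵢ Aᵢ(z*) + B(z*)` iff `0 ∈ 𝒯(w₁,…,wₙ,z*)`
for some `w₁,…,wₙ`. -/
theorem solves_inclusion_iff_prodSpaceOp {d n : ℕ}
    (A : Fin n → Ed d → Set (Ed d)) (B : Ed d → Ed d) (zs : Ed d) :
    (∃ a : Fin n → Ed d, (∀ i, a i ∈ A i zs) ∧ (∑ i, a i) + B zs = 0) ↔
      ∃ w : Fin n → Ed d, (0 : (Fin n → Ed d) × Ed d) ∈ prodSpaceOp A B (w, zs) := by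
  constructor
  · rintro ⟨a, ha, hsum⟩
    refine ⟨a, fun _ => zs, ha, by funext i; simp, ?_⟩
    have : B zs + ∑ i, a i = 0 := by rw [add_comm]; exact hsum
    exact this.symm
  · rintro ⟨w, x, hx, h1, h2⟩
    have hxz : ∀ i, x i = zs := fun i => by
      have := congrFun h1 i
      simpa [sub_eq_zero] using this.symm
    refine ⟨w, fun i => by rw [← hxz i]; exact hx i, ?_⟩
    have : (0 : Ed d) = B zs + ∑ i, w i := h2
    linear_combination (norm := module) this.symm
end
end
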